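/- For a mechanical Lagrangian with positive definite mass matrix M and nonzero constraint covector μ(q), the quantity ‖μ(q)‖²_M := ⟨μ(q), M⁻¹μ(q)⟩ is strictly positive, so the nonholonomic Newmark method F_h^{0,0,0} is explicit: given (q_k, v_k) with ⟨μ(q_k), v_k⟩ = 0, the values λ_k, q_{k+1}, λ′_{k+1}, v_{k+1} are each determined by closed-form expressions, namely λ_k = ⟨μ(q_k), M⁻¹∇V(q_k)⟩/‖μ(q_k)‖²_M, q_{k+1} = q_k + h v_k + (h²/2)(−M⁻¹∇V(q_k) + λ_k M⁻¹μ(q_k)), λ′_{k+1} = −(2/(h‖μ(q_{k+1})‖²_M))⟨μ(q_{k+1}), (q_{k+1}−q_k)/h⟩ + ⟨μ(q_{k+1}), M⁻¹∇V(q_{k+1})⟩/‖μ(q_{k+1})‖²_M, and v_{k+1} = (q_{k+1} − q_k)/h + (h/2)(−M⁻¹∇V(q_{k+1}) + λ′_{k+1} M⁻¹μ(q_{k+1})); moreover this v_{k+1} satisfies the constraint ⟨μ(q_{k+1}), v_{k+1}⟩ = 0. -/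

import Mathlib

/-!
Since `M⁻¹` is positive definite, `‖μ(q)‖²_M > 0`, so both multipliers are well defined.
Each closed-form multiplier is chosen so that the component along `μ` of the corresponding
update cancels: `λ_k` kills the `μ(q_k)`-component of the force, so the position step
inherits `⟨μ(q_k), v_k⟩ = 0`, and `λ′_{k+1}` kills the `μ(q_{k+1})`-component of `v_{k+1}`.
-/

open Matrix

theorem Matrix.PosDef.dotProduct_inv_mulVec_pos {ι : Type*} [Fintype ι] [DecidableEq ι]
    {M : Matrix ι ι ℝ} (hM : M.PosDef) {x : ι → ℝ} (hx : x ≠ 0) :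
    0 < x ⬝ᵥ (M⁻¹ *ᵥ x) := by
  simpa using hM.inv.dotProduct_mulVec_pos hx

section Newmark

variable {ι K : Type*} [Fintype ι] [Field K]

theorem dotProduct_neg_add_div_smul_eq_zero (m u w : ι → K) (hw : m ⬝ᵥ w ≠ 0) :
    m ⬝ᵥ (-u + (m ⬝ᵥ u / m ⬝ᵥ w) • w) = 0 := by
  simp only [dotProduct_add, dotProduct_neg, dotProduct_smul, smul_eq_mul]
  field_simp
  ring

theorem dotProduct_newmark_velocity_eq_zero [CharZero K] (m d u w : ι → K) {h : K}
    (hh : h ≠ 0) (hw : m ⬝ᵥ w ≠ 0) :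
    m ⬝ᵥ (d + (h / 2) • (-u +
      (-(2 / (h * m ⬝ᵥ w)) * (m ⬝ᵥ d) + m ⬝ᵥ u / m ⬝ᵥ w) • w)) = 0 := by
  simp only [dotProduct_add, dotProduct_neg, dotProduct_smul, smul_eq_mul]
  field_simp
  ring

theorem newmark_backward_position_eq {E : Type*} [AddCommGroup E] [Module K E] {h : K}
    (hh : h ≠ 0) (x y F : E) :
    x = y - h • ((1 / h) • (y - x) + (h / 2) • F) + (h ^ 2 / 2) • F := by
  match_scalars <;> field_simp <;> ring

end Newmark

theorem nonholonomic_newmark_explicit_general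
    (n : ℕ) (M : Matrix (Fin n) (Fin n) ℝ) (hM : M.PosDef)
    (gradV : (Fin n → ℝ) → (Fin n → ℝ))
    (μ : (Fin n → ℝ) → (Fin n → ℝ)) (hμ : ∀ q, μ q ≠ 0)
    (h : ℝ) (hh : 0 < h)
    (qk vk : Fin n → ℝ) (hvk : μ qk ⬝ᵥ vk = 0)
    (lamk lamk1' : ℝ) (qk1 vk1 : Fin n → ℝ)
    (hlamk : lamk = (μ qk ⬝ᵥ (M⁻¹ *ᵥ gradV qk)) / (μ qk ⬝ᵥ (M⁻¹ *ᵥ μ qk)))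
    (hqk1 : qk1 = qk + h • vk + (h^2/2) • (-(M⁻¹ *ᵥ gradV qk) + lamk • (M⁻¹ *ᵥ μ qk)))
    (hlamk1' : lamk1' = -(2/(h * (μ qk1 ⬝ᵥ (M⁻¹ *ᵥ μ qk1)))) *
        (μ qk1 ⬝ᵥ ((1/h) • (qk1 - qk)))
      + (μ qk1 ⬝ᵥ (M⁻¹ *ᵥ gradV qk1)) / (μ qk1 ⬝ᵥ (M⁻¹ *ᵥ μ qk1)))
    (hvk1 : vk1 = (1/h) • (qk1 - qk)
      + (h/2) • (-(M⁻¹ *ᵥ gradV qk1) + lamk1' • (M⁻¹ *ᵥ μ qk1))) :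
    (∀ q, 0 < μ q ⬝ᵥ (M⁻¹ *ᵥ μ q)) ∧
    qk = qk1 - h • vk1 + (h^2/2) • (-(M⁻¹ *ᵥ gradV qk1) + lamk1' • (M⁻¹ *ᵥ μ qk1)) ∧
    μ qk ⬝ᵥ ((1/h) • (qk1 - qk)) = 0 ∧
    μ qk1 ⬝ᵥ vk1 = 0 := by
  have hpos : ∀ q, 0 < μ q ⬝ᵥ (M⁻¹ *ᵥ μ q) := fun q => hM.dotProduct_inv_mulVec_pos (hμ q)
  have hstep : qk1 - qk = h • vk + (h^2/2) • (-(M⁻¹ *ᵥ gradV qk) + lamk • (M⁻¹ *ᵥ μ qk)) := by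
    rw [hqk1]; abel
  refine ⟨hpos, ?_, ?_, ?_⟩
  · rw [hvk1]
    exact newmark_backward_position_eq hh.ne' _ _ _
  · rw [hstep, hlamk, dotProduct_smul, dotProduct_add, dotProduct_smul, dotProduct_smul, hvk,
      dotProduct_neg_add_div_smul_eq_zero _ _ _ (hpos qk).ne']
    simp
  · rw [hvk1, hlamk1']
    exact dotProduct_newmark_velocity_eq_zero _ _ _ _ hh.ne' (hpos qk1).ne'

/-- The nonholonomic Newmark method F_h^{0,0,0} is explicit for mechanical Lagrangians:
‖μ(q)‖²_M = ⟨μ(q), M⁻¹μ(q)⟩ is strictly positive, and the closed-form expressions for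
λ_k, q_{k+1}, λ′_{k+1}, v_{k+1} satisfy the equations of the method, in particular the
final velocity satisfies the constraint ⟨μ(q_{k+1}), v_{k+1}⟩ = 0. -/
theorem nonholonomic_newmark_explicit
    (n : ℕ) (M : Matrix (Fin n) (Fin n) ℝ) (hM : M.PosDef)
    (V : (Fin n → ℝ) → ℝ) (gradV : (Fin n → ℝ) → (Fin n → ℝ))
    (hV : Differentiable ℝ V)
    (hgrad : ∀ q w, fderiv ℝ V q w = gradV q ⬝ᵥ w)
    (μ : (Fin n → ℝ) → (Fin n → ℝ)) (hμ : ∀ q, μ q ≠ 0)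
    (h : ℝ) (hh : 0 < h)
    (qk vk : Fin n → ℝ) (hvk : μ qk ⬝ᵥ vk = 0)
    (lamk lamk1' : ℝ) (qk1 vk1 : Fin n → ℝ)
    (hlamk : lamk = (μ qk ⬝ᵥ (M⁻¹ *ᵥ gradV qk)) / (μ qk ⬝ᵥ (M⁻¹ *ᵥ μ qk)))
    (hqk1 : qk1 = qk + h • vk + (h^2/2) • (-(M⁻¹ *ᵥ gradV qk) + lamk • (M⁻¹ *ᵥ μ qk)))
    (hlamk1' : lamk1' = -(2/(h * (μ qk1 ⬝ᵥ (M⁻¹ *ᵥ μ qk1)))) *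
        (μ qk1 ⬝ᵥ ((1/h) • (qk1 - qk)))
      + (μ qk1 ⬝ᵥ (M⁻¹ *ᵥ gradV qk1)) / (μ qk1 ⬝ᵥ (M⁻¹ *ᵥ μ qk1)))
    (hvk1 : vk1 = (1/h) • (qk1 - qk)
      + (h/2) • (-(M⁻¹ *ᵥ gradV qk1) + lamk1' • (M⁻¹ *ᵥ μ qk1))) :
    (∀ q, 0 < μ q ⬝ᵥ (M⁻¹ *ᵥ μ q)) ∧
    qk = qk1 - h • vk1 + (h^2/2) • (-(M⁻¹ *ᵥ gradV qk1) + lamk1' • (M⁻¹ *ᵥ μ qk1)) ∧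
    μ qk ⬝ᵥ ((1/h) • (qk1 - qk)) = 0 ∧
    μ qk1 ⬝ᵥ vk1 = 0 :=
  nonholonomic_newmark_explicit_general n M hM gradV μ hμ h hh qk vk hvk lamk lamk1' qk1 vk1 hlamk
    hqk1 hlamk1' hvk1
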